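/- arXiv:1906.07074 — 4 statements merged into one kernel-verified Lean document; each statement's English description precedes it below -/
import Mathlib

section
/- In the localized algebra U(g)[f^{−1}], the maps φ_a(u) := Σ_{i=0}^∞ C(a,i) (ad f)^i(u) f^{−i} for a ∈ ℂ (finite sums, since ad f is locally nilpotent) form a one-parameter group of algebra automorphisms: φ_a ∘ φ_b = φ_{a+b} for all a, b ∈ ℂ, and for a = s ∈ ℤ, φ_s(u) = f^s u f^{−s}. -/
/-!
For `u` with `(ad f)^[n] u = 0`, `φ a u` is a polynomial in `a` with coefficients in `B`.
Since `f * x * g = ad f x * g + x`, Pascal's rule gives `φ (c + 1) u = f * φ c u * g`, so for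
`s ∈ ℕ` the map `φ s` is conjugation by `f ^ s` and `φ (-s)` is conjugation by `g ^ s`.
An identity between polynomial expressions in `a` that holds for all `a ∈ ℕ` holds for all `a`
(apply a linear functional and count roots). The group law and multiplicativity therefore
follow from those of conjugation, and `φ (-a)` inverts `φ a`.
-/

open Finset Polynomial

theorem Polynomial.sum_eval_smul_eq_of_forall_natCast {K M ι κ : Type*} [Field K] [CharZero K]
    [AddCommGroup M] [Module K M] (s : Finset ι) (t : Finset κ) (p : ι → K[X]) (q : κ → K[X])
    (x : ι → M) (y : κ → M)
    (h : ∀ m : ℕ, ∑ i ∈ s, (p i).eval (m : K) • x i = ∑ j ∈ t, (q j).eval (m : K) • y j)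
    (a : K) : ∑ i ∈ s, (p i).eval a • x i = ∑ j ∈ t, (q j).eval a • y j := by
  rw [← sub_eq_zero, ← Module.forall_dual_apply_eq_zero_iff K]
  intro ψ
  set P : K[X] := ∑ i ∈ s, ψ (x i) • p i - ∑ j ∈ t, ψ (y j) • q j
  have hP : ∀ c : K,
      P.eval c = ψ (∑ i ∈ s, (p i).eval c • x i - ∑ j ∈ t, (q j).eval c • y j) := by
    intro c
    simp [P, eval_finsetSum, mul_comm]
  have hP0 : P = 0 := by
    refine eq_zero_of_infinite_isRoot P
      ((Set.infinite_range_of_injective Nat.cast_injective).mono ?_)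
    rintro _ ⟨m, rfl⟩
    rw [Set.mem_ofPred_eq, IsRoot, hP, h m, sub_self, map_zero]
  rw [← hP, hP0, eval_zero]

namespace PowConj

variable {K B : Type*} [Field K] [CharZero K] [Ring B] [Algebra K B]

variable (K) in
noncomputable def choosePoly (i : ℕ) : K[X] := C (i.factorial : K)⁻¹ * descPochhammer K i

theorem eval_choosePoly (a : K) (i : ℕ) : (choosePoly K i).eval a = Ring.choose a i := by
  rw [choosePoly, eval_mul, eval_C, Ring.choose_eq_smul, smul_eq_mul, ← aeval_eq_smeval,
    ← eval_map_algebraMap, descPochhammer_map]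

theorem _root_.Ring.choose_eq_prod_range_div (a : K) (i : ℕ) :
    Ring.choose a i = (∏ j ∈ range i, (a - j)) / i.factorial := by
  rw [← eval_choosePoly, choosePoly, eval_mul, eval_C, descPochhammer_eval_eq_prod_range,
    inv_mul_eq_div]

def ad (f : B) : B →+ B := AddMonoidHom.mulLeft f - AddMonoidHom.mulRight f

theorem ad_apply (f x : B) : ad f x = f * x - x * f := rfl

theorem iterate_ad_eq_zero_of_le {f u : B} {n m : ℕ} (hnm : n ≤ m) (hu : (ad f)^[n] u = 0) :
    (ad f)^[m] u = 0 := by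
  obtain ⟨k, rfl⟩ := Nat.exists_eq_add_of_le hnm
  rw [add_comm, Function.iterate_add_apply, hu, iterate_map_zero]

noncomputable def conjSum (f g : B) (a : K) (n : ℕ) (u : B) : B :=
  ∑ i ∈ range n, Ring.choose a i • ((ad f)^[i] u * g ^ i)

variable {f g : B}

theorem conjSum_add (a : K) (n : ℕ) (u v : B) :
    conjSum f g a n (u + v) = conjSum f g a n u + conjSum f g a n v := by
  simp only [conjSum, iterate_map_add, add_mul, smul_add, sum_add_distrib]

theorem conjSum_one (a : K) (u : B) : conjSum f g a 1 u = u := by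
  simp [conjSum]

theorem conjSum_zero_succ (n : ℕ) (u : B) : conjSum f g (0 : K) (n + 1) u = u := by
  simp [conjSum, sum_range_succ']

theorem conjSum_eq_sum_eval (a : K) (n : ℕ) (u : B) :
    conjSum f g a n u = ∑ i ∈ range n, (choosePoly K i).eval a • ((ad f)^[i] u * g ^ i) := by
  simp only [conjSum, eval_choosePoly]

theorem mul_conjSum_mul (hfg : f * g = 1) {n : ℕ} {u : B} (hu : (ad f)^[n] u = 0) (a : K) :
    f * conjSum f g a n u * g = conjSum f g (a + 1) (n + 1) u := by
  set T : ℕ → B := fun i => (ad f)^[i] u * g ^ i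
  have hT : ∀ i, f * T i * g = T (i + 1) + T i := by
    intro i
    have hfgi : f * g ^ (i + 1) = g ^ i := by rw [pow_succ', ← mul_assoc, hfg, one_mul]
    simp only [T, Function.iterate_succ_apply', ad_apply]
    rw [sub_mul, mul_assoc _ f, hfgi, sub_add_cancel, pow_succ]
    simp only [mul_assoc]
  have hTn : T n = 0 := by simp [T, hu]
  calc f * conjSum f g a n u * g = ∑ i ∈ range n, Ring.choose a i • (T (i + 1) + T i) := by
        simp only [conjSum, mul_sum, sum_mul, mul_smul_comm, smul_mul_assoc, ← hT, T, mul_assoc]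
    _ = ∑ i ∈ range n, Ring.choose a i • T (i + 1)
          + ∑ i ∈ range (n + 1), Ring.choose a i • T i := by
        rw [sum_range_succ _ n, hTn, smul_zero, add_zero, ← sum_add_distrib]
        simp only [smul_add]
    _ = conjSum f g (a + 1) (n + 1) u := by
        rw [conjSum, sum_range_succ', sum_range_succ' _ n]
        simp only [Ring.choose_succ_succ, add_smul, sum_add_distrib, Ring.choose_zero_right, T]
        abel

def IsPowConj (f g : B) (φ : K → B → B) : Prop :=
  ∀ a u n, (ad f)^[n] u = 0 → φ a u = conjSum f g a n u

namespace IsPowConj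

variable {φ : K → B → B}

theorem map_one (hφ : IsPowConj f g φ) (a : K) : φ a 1 = 1 := by
  rw [hφ a 1 1 (by simp [ad_apply]), conjSum_one]

theorem map_add (hφ : IsPowConj f g φ) (hnil : ∀ u, ∃ n, (ad f)^[n] u = 0) (a : K) (u v : B) :
    φ a (u + v) = φ a u + φ a v := by
  obtain ⟨n₁, h₁⟩ := hnil u
  obtain ⟨n₂, h₂⟩ := hnil v
  have hu := iterate_ad_eq_zero_of_le (n₁.le_add_right n₂) h₁
  have hv := iterate_ad_eq_zero_of_le (n₂.le_add_left n₁) h₂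
  rw [hφ a u _ hu, hφ a v _ hv, hφ a _ _ (by rw [iterate_map_add, hu, hv, add_zero]),
    conjSum_add]

theorem apply_zero (hφ : IsPowConj f g φ) (hnil : ∀ u, ∃ n, (ad f)^[n] u = 0) (u : B) :
    φ 0 u = u := by
  obtain ⟨n, hn⟩ := hnil u
  rw [hφ 0 u (n + 1) (iterate_ad_eq_zero_of_le n.le_succ hn), conjSum_zero_succ]

theorem apply_add_one (hφ : IsPowConj f g φ) (hfg : f * g = 1)
    (hnil : ∀ u, ∃ n, (ad f)^[n] u = 0) (c : K) (u : B) : φ (c + 1) u = f * φ c u * g := by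
  obtain ⟨n, hn⟩ := hnil u
  rw [hφ c u n hn, mul_conjSum_mul hfg hn, hφ _ u _ (iterate_ad_eq_zero_of_le n.le_succ hn)]

theorem apply_natCast_add (hφ : IsPowConj f g φ) (hfg : f * g = 1)
    (hnil : ∀ u, ∃ n, (ad f)^[n] u = 0) (s : ℕ) (b : K) (u : B) :
    φ (s + b) u = f ^ s * φ b u * g ^ s := by
  induction s with
  | zero => simp
  | succ s ih =>
    rw [Nat.cast_succ, add_right_comm, hφ.apply_add_one hfg hnil, ih, pow_succ', pow_succ]
    simp only [mul_assoc]

theorem apply_natCast (hφ : IsPowConj f g φ) (hfg : f * g = 1)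
    (hnil : ∀ u, ∃ n, (ad f)^[n] u = 0) (s : ℕ) (u : B) : φ s u = f ^ s * u * g ^ s := by
  simpa [hφ.apply_zero hnil] using hφ.apply_natCast_add hfg hnil s 0 u

theorem apply_neg_natCast (hφ : IsPowConj f g φ) (hfg : f * g = 1) (hgf : g * f = 1)
    (hnil : ∀ u, ∃ n, (ad f)^[n] u = 0) (s : ℕ) (u : B) : φ (-s) u = g ^ s * u * f ^ s := by
  have h := hφ.apply_natCast_add hfg hnil s (-s) u
  rw [add_neg_cancel, hφ.apply_zero hnil] at h
  calc φ (-s) u = g ^ s * f ^ s * φ (-s) u * (g ^ s * f ^ s) := by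
        rw [pow_mul_pow_eq_one s hgf, one_mul, mul_one]
    _ = g ^ s * u * f ^ s := by
        conv_rhs => rw [h]
        simp only [mul_assoc]

theorem apply_apply (hφ : IsPowConj f g φ) (hfg : f * g = 1)
    (hnil : ∀ u, ∃ n, (ad f)^[n] u = 0) (a b : K) (u : B) : φ a (φ b u) = φ (a + b) u := by
  obtain ⟨n, hn⟩ := hnil u
  obtain ⟨m, hm⟩ := hnil (φ b u)
  have hshift : ∀ c : K, φ (c + b) u = ∑ i ∈ range n,
      ((choosePoly K i).comp (X + C b)).eval c • ((ad f)^[i] u * g ^ i) := by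
    intro c
    rw [hφ _ u n hn, conjSum_eq_sum_eval]
    simp only [eval_comp, eval_add, eval_X, eval_C]
  rw [hφ a _ m hm, conjSum_eq_sum_eval, hshift]
  refine sum_eval_smul_eq_of_forall_natCast _ _ _ _ _ _ (fun k => ?_) a
  rw [← conjSum_eq_sum_eval, ← hφ _ _ m hm, ← hshift, hφ.apply_natCast hfg hnil,
    hφ.apply_natCast_add hfg hnil]

theorem bijective (hφ : IsPowConj f g φ) (hfg : f * g = 1)
    (hnil : ∀ u, ∃ n, (ad f)^[n] u = 0) (a : K) : Function.Bijective (φ a) :=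
  Function.bijective_iff_has_inverse.2 ⟨φ (-a),
    fun u => by rw [hφ.apply_apply hfg hnil, neg_add_cancel, hφ.apply_zero hnil],
    fun u => by rw [hφ.apply_apply hfg hnil, add_neg_cancel, hφ.apply_zero hnil]⟩

theorem map_mul (hφ : IsPowConj f g φ) (hfg : f * g = 1) (hgf : g * f = 1)
    (hnil : ∀ u, ∃ n, (ad f)^[n] u = 0) (a : K) (u v : B) : φ a (u * v) = φ a u * φ a v := by
  obtain ⟨n₁, h₁⟩ := hnil u
  obtain ⟨n₂, h₂⟩ := hnil v
  obtain ⟨n₃, h₃⟩ := hnil (u * v)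
  have hu := iterate_ad_eq_zero_of_le (by omega : n₁ ≤ n₁ + n₂ + n₃) h₁
  have hv := iterate_ad_eq_zero_of_le (by omega : n₂ ≤ n₁ + n₂ + n₃) h₂
  have huv := iterate_ad_eq_zero_of_le (by omega : n₃ ≤ n₁ + n₂ + n₃) h₃
  set n := n₁ + n₂ + n₃
  have hprod : ∀ c : K, φ c u * φ c v = ∑ ij ∈ range n ×ˢ range n,
      (choosePoly K ij.1 * choosePoly K ij.2).eval c •
        ((ad f)^[ij.1] u * g ^ ij.1 * ((ad f)^[ij.2] v * g ^ ij.2)) := by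
    intro c
    rw [hφ c u n hu, hφ c v n hv, conjSum_eq_sum_eval, conjSum_eq_sum_eval, sum_mul_sum,
      sum_product]
    simp only [eval_mul, smul_mul_smul_comm]
  rw [hφ a _ n huv, conjSum_eq_sum_eval, hprod]
  refine sum_eval_smul_eq_of_forall_natCast _ _ _ _ _ _ (fun m => ?_) a
  rw [← conjSum_eq_sum_eval, ← hφ _ _ n huv, ← hprod]
  simp only [hφ.apply_natCast hfg hnil, mul_assoc]
  rw [← mul_assoc (g ^ m), pow_mul_pow_eq_one m hgf, one_mul]

end IsPowConj

end PowConj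

/-- the maps `φ_a(u) = ∑ C(a,i) (ad f)^i(u) f^{-i}` on `U(g)[f⁻¹]`
form a one-parameter group of algebra automorphisms, with `φ_s(u) = f^s u f^{-s}`
for integer `s`. -/
theorem stmt_5 (B : Type*) [Ring B] [Algebra ℂ B] (f g : B)
    (hfg : f * g = 1) (hgf : g * f = 1)
    (hnil : ∀ u : B, ∃ n : ℕ, (fun x => f * x - x * f)^[n] u = 0)
    (φ : ℂ → B → B)
    (hφ : ∀ (a : ℂ) (u : B) (n : ℕ), (fun x => f * x - x * f)^[n] u = 0 →
      φ a u = ∑ i ∈ Finset.range n,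
        ((∏ j ∈ Finset.range i, (a - (j : ℂ))) / (Nat.factorial i : ℂ)) •
          ((fun x => f * x - x * f)^[i] u * g ^ i)) :
    (∀ a : ℂ, Function.Bijective (φ a) ∧ φ a 1 = 1 ∧
      (∀ u v : B, φ a (u + v) = φ a u + φ a v) ∧
      (∀ u v : B, φ a (u * v) = φ a u * φ a v)) ∧
    (∀ (a b : ℂ) (u : B), φ a (φ b u) = φ (a + b) u) ∧
    (∀ (s : ℕ) (u : B),
      φ (s : ℂ) u = f ^ s * u * g ^ s ∧ φ (-(s : ℂ)) u = g ^ s * u * f ^ s) := by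
  have hφ' : PowConj.IsPowConj f g φ := fun a u n hn => by
    rw [hφ a u n hn, PowConj.conjSum]
    simp only [Ring.choose_eq_prod_range_div]
    rfl
  refine ⟨fun a => ⟨hφ'.bijective hfg hnil a, hφ'.map_one a, hφ'.map_add hnil a,
    hφ'.map_mul hfg hgf hnil a⟩, hφ'.apply_apply hfg hnil,
    fun s u => ⟨hφ'.apply_natCast hfg hnil s u, hφ'.apply_neg_natCast hfg hgf hnil s u⟩⟩
end

section
/- Let M(b) be the sl_2 Verma module of highest weight b. Then the twisted localization D_a(M(b)) of the Verma module M(b) is a simple sl_2-module provided a ∉ ℤ and a − b ∉ ℤ. -/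
/-- the twisted localization `D_a(M(b))` of the `sl₂` Verma module
`M(b)` (with basis `f^{a+n} v`, `n ∈ ℤ`) is a simple `sl₂`-module provided
`a ∉ ℤ` and `a - b ∉ ℤ`. -/
theorem stmt_8 (a b : ℂ)
    (ha : ∀ m : ℤ, (m : ℂ) ≠ a) (hab : ∀ m : ℤ, (m : ℂ) ≠ a - b)
    (M : Type*) [AddCommGroup M] [Module ℂ M]
    (vec : ℤ → M)
    (hspan : Submodule.span ℂ (Set.range vec) = ⊤)
    (hind : LinearIndependent ℂ vec)
    (E H F : Module.End ℂ M)
    (hH : ∀ n : ℤ, H (vec n) = (b - 2 * (a + n)) • vec n)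
    (hE : ∀ n : ℤ, E (vec n) = ((a + n) * (b - (a + n) + 1)) • vec (n - 1))
    (hF : ∀ n : ℤ, F (vec n) = vec (n + 1)) :
    ∀ N : Submodule ℂ M,
      (∀ x ∈ N, E x ∈ N ∧ H x ∈ N ∧ F x ∈ N) → N ≠ ⊥ → N = ⊤ := by
  intro N hNinv hNbot
  classical
  set lam : ℤ → ℂ := fun n => b - 2 * (a + n) with hlam
  set B : Module.Basis ℤ ℂ M := Module.Basis.mk hind (le_of_eq hspan.symm) with hBdef
  have hB : ∀ n, B n = vec n := fun n => Module.Basis.mk_apply hind _ n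
  -- repr of H x
  have hHrepr : ∀ (x : M) (k : ℤ), B.repr (H x) k = lam k * B.repr x k := by
    intro x k
    have h1 : (Finsupp.lapply k ∘ₗ (B.repr : M →ₗ[ℂ] (ℤ →₀ ℂ)) ∘ₗ H)
        = lam k • (Finsupp.lapply k ∘ₗ (B.repr : M →ₗ[ℂ] (ℤ →₀ ℂ))) := by
      apply B.ext
      intro i
      have : H (B i) = lam i • B i := by rw [hB]; exact hH i
      simp only [LinearMap.comp_apply, LinearMap.coe_comp, Function.comp_apply,
        LinearMap.smul_apply, this, map_smul, Module.Basis.repr_self, Finsupp.lapply_apply,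
        Finsupp.smul_apply, smul_eq_mul]
      by_cases hik : i = k
      · subst hik; simp
      · simp [Finsupp.single_apply, hik]
    have := LinearMap.congr_fun h1 x
    simpa using this
  -- distinct eigenvalues
  have hlamne : ∀ {n m : ℤ}, n ≠ m → lam n ≠ lam m := by
    intro n m hnm h
    apply hnm
    have : (n : ℂ) = m := by
      simp only [hlam] at h
      linear_combination (-1/2 : ℂ) * h
    exact_mod_cast this
  -- key lemma
  have key : ∀ (k : ℕ) (x : M), x ∈ N → ∀ n ∈ (B.repr x).support,
      (B.repr x).support.card ≤ k → vec n ∈ N := by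
    intro k
    induction k with
    | zero =>
      intro x hx n hn hcard
      simp only [Nat.le_zero, Finset.card_eq_zero] at hcard
      rw [hcard] at hn
      simp at hn
    | succ k ih =>
      intro x hx n hn hcard
      by_cases hone : (B.repr x).support ⊆ {n}
      · have hsingle : B.repr x = Finsupp.single n (B.repr x n) :=
          Finsupp.support_subset_singleton.mp hone
        have hxeq : x = (B.repr x n) • vec n := by
          conv_lhs => rw [← B.repr.symm_apply_apply x, hsingle]
          rw [Module.Basis.repr_symm_single, hB]
        have hc : B.repr x n ≠ 0 := Finsupp.mem_support_iff.mp hn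
        have hmem : (B.repr x n)⁻¹ • x ∈ N := N.smul_mem _ hx
        have h2 : (B.repr x n)⁻¹ • x = vec n := by
          nth_rewrite 2 [hxeq]
          rw [smul_smul, inv_mul_cancel₀ hc, one_smul]
        rwa [h2] at hmem
      · obtain ⟨m, hm, hmn⟩ : ∃ m ∈ (B.repr x).support, m ≠ n := by
          by_contra hcon
          push_neg at hcon
          exact hone fun z hz => Finset.mem_singleton.mpr (hcon z hz)
        set y := H x - lam m • x with hy
        have hyN : y ∈ N := N.sub_mem (hNinv x hx).2.1 (N.smul_mem _ hx)
        have hyrepr : ∀ k', B.repr y k' = (lam k' - lam m) * B.repr x k' := by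
          intro k'
          rw [hy, map_sub, map_smul, Finsupp.sub_apply, Finsupp.smul_apply,
            hHrepr, smul_eq_mul]
          ring
        have hny : n ∈ (B.repr y).support := by
          rw [Finsupp.mem_support_iff, hyrepr]
          exact mul_ne_zero (sub_ne_zero.mpr (hlamne (Ne.symm hmn))) (Finsupp.mem_support_iff.mp hn)
        have hsub : (B.repr y).support ⊆ (B.repr x).support.erase m := by
          intro z hz
          rw [Finsupp.mem_support_iff, hyrepr] at hz
          rcases mul_ne_zero_iff.mp hz with ⟨h1, h2⟩
          refine Finset.mem_erase.mpr ⟨?_, Finsupp.mem_support_iff.mpr h2⟩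
          intro hzm; subst hzm; simp at h1
        have hcard' : (B.repr y).support.card ≤ k := by
          have := Finset.card_le_card hsub
          rw [Finset.card_erase_of_mem hm] at this
          omega
        exact ih y hyN n hny hcard'
  -- some vec n0 is in N
  obtain ⟨x, hx, hx0⟩ := Submodule.exists_mem_ne_zero_of_ne_bot hNbot
  have hreprne : B.repr x ≠ 0 := fun h => hx0 (by
    have := congrArg B.repr.symm h
    simpa using this)
  obtain ⟨n0, hn0⟩ := Finsupp.support_nonempty_iff.mpr hreprne
  have hvn0 : vec n0 ∈ N := key (B.repr x).support.card x hx n0 hn0 le_rfl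
  -- propagation
  have hup : ∀ n, vec n ∈ N → vec (n + 1) ∈ N := by
    intro n h
    have := (hNinv _ h).2.2
    rwa [hF] at this
  have hdown : ∀ n, vec n ∈ N → vec (n - 1) ∈ N := by
    intro n h
    have hc : (a + n) * (b - (a + n) + 1) ≠ 0 := by
      apply mul_ne_zero
      · intro h0
        apply ha (-n)
        push_cast
        linear_combination -h0
      · intro h0
        apply hab (1 - n)
        push_cast
        linear_combination h0
    have hEv := (hNinv _ h).1
    rw [hE] at hEv
    have := N.smul_mem ((a + n) * (b - (a + n) + 1))⁻¹ hEv
    rwa [smul_smul, inv_mul_cancel₀ hc, one_smul] at this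
  have hupk : ∀ k : ℕ, vec (n0 + k) ∈ N := by
    intro k
    induction k with
    | zero => simpa using hvn0
    | succ k ih =>
      have := hup _ ih
      convert this using 2
      push_cast; ring
  have hdownk : ∀ k : ℕ, vec (n0 - k) ∈ N := by
    intro k
    induction k with
    | zero => simpa using hvn0
    | succ k ih =>
      have := hdown _ ih
      convert this using 2
      push_cast; ring
  have hall : ∀ m : ℤ, vec m ∈ N := by
    intro m
    obtain ⟨k, hk⟩ : ∃ k : ℕ, m = n0 + k ∨ m = n0 - k := ⟨(m - n0).natAbs, by omega⟩
    rcases hk with hk | hk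
    · rw [hk]; exact hupk k
    · rw [hk]; exact hdownk k
  rw [eq_top_iff, ← hspan, Submodule.span_le]
  rintro _ ⟨m, rfl⟩
  exact hall m
end

section
/- In osp(1|2) with even basis e, h, f and odd elements E, F satisfying E² = e, F² = −f, [E,F] = h, [f,E] = F, in the twisted localization of the Verma module M(b) (highest weight vector v with E v = 0, h v = b v), the vector F f^c v is singular (killed by E) if and only if c = b, i.e. E(F f^c v) = 0 ⟺ c = b, and moreover E f^c v ≠ 0 for c ≠ 0. -/
/-- in the twisted localization of the `osp(1|2)` Verma module
`M(b)` (highest weight vector `v` with `E v = 0`, `h v = b v`; `Φ c` plays the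
role of multiplication by `f^c`), the vector `f^c F v` is singular iff `c = b`,
and `E f^c v ≠ 0` for `c ≠ 0`. -/
theorem stmt_10 (b : ℂ) (M : Type*) [AddCommGroup M] [Module ℂ M]
    (E F H : Module.End ℂ M) (Φ : ℂ → Module.End ℂ M) (v : M)
    (hEv : E v = 0) (hHv : H v = b • v)
    (h1 : ∀ c : ℂ, Φ c * F = F * Φ c)
    (h2 : ∀ c : ℂ, Φ c * E = E * Φ c + c • (F * Φ (c - 1)))
    (h3 : ∀ c : ℂ,
      Φ c * (F * E) = (H + c • (1 : Module.End ℂ M)) * Φ c - E * F * Φ c)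
    (h4 : ∀ c : ℂ, Φ c * H = (H + (2 * c) • (1 : Module.End ℂ M)) * Φ c)
    (hind : LinearIndependent ℂ
      (fun p : ℂ × Bool => if p.2 then Φ p.1 (F v) else Φ p.1 v)) :
    ∀ c : ℂ,
      (E (F (Φ c v)) = 0 ↔ c = b) ∧ (c ≠ 0 → E (Φ c v) ≠ 0) := by
  intro c
  have hne0 : Φ c v ≠ 0 := by
    have := hind.ne_zero (c, false)
    simpa using this
  have hne1 : Φ (c - 1) (F v) ≠ 0 := by
    have := hind.ne_zero (c - 1, true)
    simpa using this
  -- compute H (Φ c v)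
  have hH : H (Φ c v) = (b - 2 * c) • Φ c v := by
    have h4' := congrArg (fun (T : Module.End ℂ M) => T v) (h4 c)
    simp only [Module.End.mul_apply, LinearMap.add_apply, LinearMap.smul_apply,
      Module.End.one_apply, hHv, map_smul] at h4'
    linear_combination (norm := module) -h4'
  -- compute E (F (Φ c v))
  have hEF : E (F (Φ c v)) = (b - c) • Φ c v := by
    have h3' := congrArg (fun (T : Module.End ℂ M) => T v) (h3 c)
    simp only [Module.End.mul_apply, LinearMap.add_apply, LinearMap.sub_apply,
      LinearMap.smul_apply, Module.End.one_apply, hEv, map_zero] at h3'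
    rw [hH] at h3'
    linear_combination (norm := module) h3'
  constructor
  · rw [hEF, smul_eq_zero]
    constructor
    · rintro (h | h)
      · linear_combination -h
      · exact absurd h hne0
    · intro h; left; rw [h]; ring
  · intro hc
    have h2' := congrArg (fun (T : Module.End ℂ M) => T v) (h2 c)
    simp only [Module.End.mul_apply, LinearMap.add_apply, LinearMap.smul_apply,
      hEv, map_zero] at h2'
    -- h2' : 0 = E (Φ c v) + c • F (Φ (c-1) v)
    have hF : F (Φ (c - 1) v) = Φ (c - 1) (F v) := by
      have := congrArg (fun (T : Module.End ℂ M) => T v) (h1 (c - 1))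
      simpa [Module.End.mul_apply] using this.symm
    intro hzero
    rw [hzero, zero_add, hF] at h2'
    exact hne1 (by
      have := h2'.symm
      exact (smul_eq_zero.mp this).resolve_left hc)
end

section
/- Let g be an affine Lie superalgebra of non-isotropic type with minimal imaginary root δ, normalized invariant form with (α|α) ∈ ℚ_{>0} for all real roots α, and suppose r ∈ ℤ_{>0} satisfies Δ_pr + rδ = Δ_pr. For λ ∈ h*, if (λ|δ) ∉ ℚ then the set Δ(λ) ∩ (α + ℤrδ) equals {α} for each α ∈ Δ(λ); in particular Δ(λ) is finite. If (λ|δ) ∈ ℚ and Δ(λ) ≠ ∅, then Δ(λ) is infinite. -/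
def Dset {V : Type*} [AddCommGroup V] [Module ℝ V]
    (Bf : V →ₗ[ℝ] V →ₗ[ℝ] ℝ) (S : Set V) (lam : V) : Set V :=
  {α ∈ S | ∃ n : ℤ, 2 * Bf lam α = (n : ℝ) * Bf α α}

/-- for an affine Lie superalgebra of non-isotropic type with
minimal imaginary root `δ`, real roots `S = WΠ_pr` (with `‖α‖² ∈ ℚ_{>0}`,
`(δ|S) = 0 = (δ|δ)`, `S + rδ = S` and finitely many classes mod `ℤrδ`):
if `(λ|δ) ∉ ℚ` then `Δ(λ) ∩ (α + ℤrδ) = {α}` for every `α ∈ Δ(λ)` and `Δ(λ)`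
is finite; if `(λ|δ) ∈ ℚ` and `Δ(λ) ≠ ∅` then `Δ(λ)` is infinite. -/
theorem stmt_16 (V : Type*) [AddCommGroup V] [Module ℝ V]
    (Bf : V →ₗ[ℝ] V →ₗ[ℝ] ℝ) (hsymm : ∀ x y : V, Bf x y = Bf y x)
    (S : Set V) (δ : V) (hδ : δ ≠ 0) (r : ℕ) (hr : 0 < r)
    (hnorm : ∀ α ∈ S, ∃ q : ℚ, 0 < q ∧ Bf α α = (q : ℝ))
    (hδS : ∀ α ∈ S, Bf δ α = 0) (hδδ : Bf δ δ = 0)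
    (hshift : ∀ α ∈ S, ∀ s : ℤ, α + (s * (r : ℤ)) • δ ∈ S)
    (hfin : ∃ T : Finset V, ∀ α ∈ S, ∃ β ∈ T, ∃ s : ℤ,
      α = β + (s * (r : ℤ)) • δ)
    (lam : V) :
    ((∀ q : ℚ, Bf lam δ ≠ (q : ℝ)) →
      (∀ α ∈ Dset Bf S lam,
        {β ∈ Dset Bf S lam | ∃ s : ℤ, β = α + (s * (r : ℤ)) • δ} = {α}) ∧
      (Dset Bf S lam).Finite) ∧
    ((∃ q : ℚ, Bf lam δ = (q : ℝ)) → (Dset Bf S lam).Nonempty →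
      (Dset Bf S lam).Infinite) := by
  classical
  set c := Bf lam δ with hc
  have key1 : ∀ α ∈ S, ∀ t : ℤ, Bf (α + t • δ) (α + t • δ) = Bf α α := by
    intro α hα t
    have h1 : Bf δ α = 0 := hδS α hα
    have h2 : Bf α δ = 0 := by rw [hsymm]; exact h1
    have ht : (t:ℤ) • δ = (t:ℝ) • δ := (Int.cast_smul_eq_zsmul ℝ t δ).symm
    rw [ht]; simp [h1, h2, hδδ]
  have key2 : ∀ (α : V) (t : ℤ), Bf lam (α + t • δ) = Bf lam α + (t : ℝ) * c := by
    intro α t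
    have ht : (t:ℤ) • δ = (t:ℝ) • δ := (Int.cast_smul_eq_zsmul ℝ t δ).symm
    rw [ht]; simp [mul_comm, hc]
  have shiftalg : ∀ (β : V) (s₁ s₂ : ℤ),
      β + (s₂ * (r:ℤ)) • δ = (β + (s₁ * (r:ℤ)) • δ) + (((s₂ - s₁) * (r:ℤ)) • δ) := by
    intro β s₁ s₂
    rw [sub_mul, sub_smul]; abel
  constructor
  · intro hirr
    have main : ∀ α ∈ Dset Bf S lam, ∀ β ∈ Dset Bf S lam, ∀ s : ℤ,
        β = α + (s * (r:ℤ)) • δ → β = α := by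
      intro α hα β hβ s hβα
      obtain ⟨hαS, m, hm⟩ := hα
      obtain ⟨hβS, n, hn⟩ := hβ
      obtain ⟨q, hq0, hq⟩ := hnorm α hαS
      rcases eq_or_ne s 0 with hs | hs
      · rw [hβα, hs]; simp
      · exfalso
        rw [hβα, key1 α hαS (s * r), key2 α (s * r)] at hn
        set t : ℤ := s * (r:ℤ) with htdef
        have htne : t ≠ 0 := mul_ne_zero hs (by exact_mod_cast hr.ne')
        have htRne : (2 * (t:ℚ)) ≠ 0 := by
          simp [htne]
        have hcr : c = ((((n : ℚ) - m) * q / (2 * (t:ℚ))) : ℚ) := by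
          have h2t : (2 * ((t:ℤ):ℝ)) ≠ 0 := by
            exact_mod_cast (by exact_mod_cast htRne : (2 * ((t:ℤ):ℝ)) ≠ 0)
          rw [hq] at hn hm
          push_cast
          rw [eq_div_iff h2t]
          nlinarith [hn, hm]
        exact hirr _ hcr
    have heq : ∀ α ∈ Dset Bf S lam,
        {β ∈ Dset Bf S lam | ∃ s : ℤ, β = α + (s * (r : ℤ)) • δ} = {α} := by
      intro α hα
      ext β
      constructor
      · rintro ⟨hβ, s, hs⟩
        exact main α hα β hβ s hs
      · rintro rfl
        exact ⟨hα, 0, by simp⟩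
    refine ⟨heq, ?_⟩
    obtain ⟨T, hT⟩ := hfin
    have hsub : Dset Bf S lam ⊆
        ⋃ β ∈ (T : Set V), {γ ∈ Dset Bf S lam | ∃ s : ℤ, γ = β + (s * (r:ℤ)) • δ} := by
      intro α hα
      obtain ⟨β, hβT, s, hs⟩ := hT α hα.1
      exact Set.mem_biUnion hβT ⟨hα, s, hs⟩
    refine Set.Finite.subset ?_ hsub
    refine Set.Finite.biUnion T.finite_toSet ?_
    intro β _
    apply Set.Subsingleton.finite
    rintro γ₁ ⟨hγ₁, s₁, hs₁⟩ γ₂ ⟨hγ₂, s₂, hs₂⟩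
    have : γ₂ = γ₁ + ((s₂ - s₁) * (r:ℤ)) • δ := by
      rw [hs₂, hs₁, ← shiftalg β s₁ s₂]
    exact (main γ₁ hγ₁ γ₂ hγ₂ _ this).symm
  · rintro ⟨q, hq⟩ ⟨α, hαS, m, hm⟩
    obtain ⟨p, hp0, hp⟩ := hnorm α hαS
    set D : ℤ := (q.den : ℤ) * p.num with hD
    have hDne : D ≠ 0 := by
      have h1 : (q.den : ℤ) ≠ 0 := by exact_mod_cast q.den_nz
      have h2 : p.num ≠ 0 := Rat.num_ne_zero.mpr hp0.ne'
      exact mul_ne_zero h1 h2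
    -- the injective family
    have key : ∀ k : ℤ, α + ((k * D) * (r:ℤ)) • δ ∈ Dset Bf S lam := by
      intro k
      refine ⟨hshift α hαS (k * D), m + 2 * k * r * q.num * p.den, ?_⟩
      rw [key1 α hαS ((k * D) * r), key2 α ((k * D) * r), hp,
        show c = (q:ℝ) from hq]
      have hmR : 2 * Bf lam α = (m : ℝ) * (p : ℝ) := by rw [hm, hp]
      have hdq : (q.den : ℚ) ≠ 0 := by exact_mod_cast q.den_nz
      have hdp : (p.den : ℚ) ≠ 0 := by exact_mod_cast p.den_nz
      have hq' : (q.den : ℚ) * q = q.num := Rat.den_mul_eq_num q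
      have hp' : (p.den : ℚ) * p = p.num := Rat.den_mul_eq_num p
      have hQ : (m : ℚ) * p + 2 * ((k * D * r : ℤ) : ℚ) * q
          = ((m + 2 * k * r * q.num * p.den : ℤ) : ℚ) * p := by
        push_cast [hD]
        linear_combination (2 * (k:ℚ) * (r:ℚ) * (p.num:ℚ)) * hq'
          - (2 * (k:ℚ) * (r:ℚ) * (q.num:ℚ)) * hp'
      have hQR := congrArg (fun x : ℚ => (x : ℝ)) hQ
      push_cast at hQR
      push_cast
      nlinarith [hQR, hmR]
    have hinj : Function.Injective (fun k : ℤ => α + ((k * D) * (r:ℤ)) • δ) := by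
      intro k₁ k₂ h
      simp only [add_right_inj] at h
      have h' : ((k₁ * D * r : ℤ) : ℝ) • δ = ((k₂ * D * r : ℤ) : ℝ) • δ := by
        rwa [Int.cast_smul_eq_zsmul, Int.cast_smul_eq_zsmul]
      have : ((k₁ * D * r : ℤ) : ℝ) = ((k₂ * D * r : ℤ) : ℝ) := by
        by_contra hne
        have := sub_smul ((k₁ * D * r : ℤ) : ℝ) ((k₂ * D * r : ℤ) : ℝ) δ
        rw [h', sub_self, eq_comm] at this
        exact hδ ((smul_eq_zero.mp this.symm).resolve_left (sub_ne_zero.mpr hne))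
      have hZ : k₁ * D * r = k₂ * D * r := by exact_mod_cast this
      have hrne : (r : ℤ) ≠ 0 := by exact_mod_cast hr.ne'
      have := mul_right_cancel₀ hrne hZ
      exact mul_right_cancel₀ hDne this
    exact Set.infinite_of_injective_forall_mem hinj key
end
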